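/- For every positive integer H, G(H) ≤ 4·max_{α ∈ [0, 1)} Σ_{1 ≤ h ≤ H} g(2παh)/h. -/

import Mathlib

open Finset

/-- `G(H)`: the maximum over `α ∈ [0,1)` and tuples `(y_h)_{1 ≤ |h| ≤ H} ∈ [−2,2]^{2H}`
of `|Σ_{1 ≤ |h| ≤ H} ((e(αh) − 1)/h)·y_h|`, where `e(z) = exp(2πi z)`. -/
noncomputable def GH (H : ℕ) : ℝ :=
  sSup {r : ℝ | ∃ α ∈ Set.Ico (0:ℝ) 1, ∃ y : ℤ → ℝ,
    (∀ h : ℤ, y h ∈ Set.Icc (-2:ℝ) 2) ∧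
    r = ‖∑ h ∈ (Finset.Icc (-(H:ℤ)) (H:ℤ)).filter (fun h => h ≠ 0),
      ((Complex.exp (2 * Real.pi * Complex.I * α * h) - 1) / h) * (y h : ℂ)‖}

/-- The 2π-periodic function `g` given on `[0, 2π)` by `sin t` on `[0, π/2]`,
`1 − cos t` on `(π/2, 3π/2)` and `−sin t` on `[3π/2, 2π)`. -/
noncomputable def gfun (t : ℝ) : ℝ :=
  let s := t - 2 * Real.pi * ⌊t / (2 * Real.pi)⌋
  if s ≤ Real.pi / 2 then Real.sin s
  else if s < 3 * Real.pi / 2 then 1 - Real.cos s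
  else -Real.sin s

lemma gfun_eq_max (t : ℝ) : gfun t = max (1 - Real.cos t) |Real.sin t| := by
  have hπ : 0 < Real.pi := Real.pi_pos
  have h2π : (0:ℝ) < 2 * Real.pi := by positivity
  set n : ℤ := ⌊t / (2 * Real.pi)⌋ with hn
  set s : ℝ := t - 2 * Real.pi * n with hsdef
  have hts : t = s + n * (2 * Real.pi) := by rw [hsdef]; ring
  have hcos : Real.cos t = Real.cos s := by
    conv_lhs => rw [hts]
    exact Real.cos_add_int_mul_two_pi s n
  have hsin : Real.sin t = Real.sin s := by
    conv_lhs => rw [hts]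
    exact Real.sin_add_int_mul_two_pi s n
  have hs0 : 0 ≤ s := by
    have h1 := Int.floor_le (t / (2 * Real.pi))
    rw [← hn] at h1
    have := (le_div_iff₀ h2π).1 h1
    rw [hsdef]; linarith
  have hs2 : s < 2 * Real.pi := by
    have h1 := Int.lt_floor_add_one (t / (2 * Real.pi))
    rw [← hn] at h1
    have := (div_lt_iff₀ h2π).1 h1
    rw [hsdef]; nlinarith
  have hgf : gfun t = if s ≤ Real.pi / 2 then Real.sin s
      else if s < 3 * Real.pi / 2 then 1 - Real.cos s else -Real.sin s := rfl
  rw [hgf, hcos, hsin]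
  by_cases hA : s ≤ Real.pi / 2
  · rw [if_pos hA]
    have hsin0 : 0 ≤ Real.sin s := Real.sin_nonneg_of_nonneg_of_le_pi hs0 (by linarith)
    have hcos0 : 0 ≤ Real.cos s := Real.cos_nonneg_of_mem_Icc ⟨by linarith, hA⟩
    have hge : 1 - Real.cos s ≤ Real.sin s := by
      nlinarith [Real.sin_sq_add_cos_sq s, mul_nonneg hsin0 hcos0]
    rw [abs_of_nonneg hsin0, max_eq_right hge]
  · rw [if_neg hA]
    push_neg at hA
    by_cases hB : s < 3 * Real.pi / 2
    · rw [if_pos hB]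
      have hcosneg : Real.cos s ≤ 0 :=
        Real.cos_nonpos_of_pi_div_two_le_of_le (le_of_lt hA) (by linarith)
      have habs : |Real.sin s| ≤ 1 - Real.cos s := by
        rw [abs_le]
        constructor
        · nlinarith [Real.neg_one_le_sin s]
        · nlinarith [Real.sin_le_one s]
      rw [max_eq_left habs]
    · rw [if_neg hB]
      push_neg at hB
      have hsin0 : Real.sin s ≤ 0 := by
        have h1 : Real.sin (s - Real.pi) = -Real.sin s := Real.sin_sub_pi s
        have h2 : 0 ≤ Real.sin (s - Real.pi) :=
          Real.sin_nonneg_of_nonneg_of_le_pi (by linarith) (by linarith)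
        linarith
      have hcos0 : 0 ≤ Real.cos s := by
        have h1 : Real.cos (s - Real.pi) = -Real.cos s := Real.cos_sub_pi s
        have h2 : Real.cos (s - Real.pi) ≤ 0 :=
          Real.cos_nonpos_of_pi_div_two_le_of_le (by linarith) (by linarith)
        linarith
      have hge : 1 - Real.cos s ≤ -Real.sin s := by
        nlinarith [Real.sin_sq_add_cos_sq s, mul_nonneg (neg_nonneg.2 hsin0) hcos0]
      rw [abs_of_nonpos hsin0, max_eq_right hge]

lemma gfun_nonneg (t : ℝ) : 0 ≤ gfun t := by
  rw [gfun_eq_max]; exact le_trans (abs_nonneg _) (le_max_right _ _)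

lemma gfun_le_two (t : ℝ) : gfun t ≤ 2 := by
  rw [gfun_eq_max]
  refine max_le (by nlinarith [Real.neg_one_le_cos t]) ?_
  rw [abs_le]; exact ⟨by nlinarith [Real.neg_one_le_sin t], by nlinarith [Real.sin_le_one t]⟩

lemma abs_cos_sub_one_le_gfun (t : ℝ) : |Real.cos t - 1| ≤ gfun t := by
  rw [gfun_eq_max, abs_of_nonpos (by nlinarith [Real.cos_le_one t])]
  exact le_trans (by ring_nf; exact le_rfl) (le_max_left _ _)

lemma abs_sin_le_gfun (t : ℝ) : |Real.sin t| ≤ gfun t := by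
  rw [gfun_eq_max]; exact le_max_right _ _

lemma pair_bound (α : ℝ) (n : ℤ) (hn : 1 ≤ n) (y y' : ℝ)
    (hy1 : -2 ≤ y) (hy2 : y ≤ 2) (hy'1 : -2 ≤ y') (hy'2 : y' ≤ 2) :
    ‖(Complex.exp (2 * Real.pi * Complex.I * α * n) - 1) / n * y
      + (Complex.exp (2 * Real.pi * Complex.I * α * (-n : ℤ)) - 1) / ((-n : ℤ) : ℂ) * y'‖
      ≤ 4 * gfun (2 * Real.pi * α * n) / n := by
  have hnR : (0:ℝ) < (n : ℝ) := by exact_mod_cast (by omega : (0:ℤ) < n)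
  have hn0 : ((n : ℤ) : ℂ) ≠ 0 := Int.cast_ne_zero.2 (by omega)
  set z : ℝ := 2 * Real.pi * α * n with hz
  have e1 : (2 * (Real.pi : ℂ) * Complex.I * α * (n : ℂ)) = (z : ℂ) * Complex.I := by
    rw [hz]; push_cast; ring
  have e2 : (2 * (Real.pi : ℂ) * Complex.I * α * ((-n : ℤ) : ℂ)) = ((-z : ℝ) : ℂ) * Complex.I := by
    rw [hz]; push_cast; ring
  set a : ℝ := (Real.cos z - 1) * (y - y') / n with ha
  set b : ℝ := Real.sin z * (y + y') / n with hb
  have key : (Complex.exp (2 * Real.pi * Complex.I * α * n) - 1) / n * y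
      + (Complex.exp (2 * Real.pi * Complex.I * α * (-n : ℤ)) - 1) / ((-n : ℤ) : ℂ) * y'
      = (a : ℂ) + (b : ℂ) * Complex.I := by
    rw [e1, e2, Complex.exp_mul_I, Complex.exp_mul_I, ha, hb]
    rw [← Complex.ofReal_cos, ← Complex.ofReal_sin, ← Complex.ofReal_cos, ← Complex.ofReal_sin]
    rw [Real.cos_neg, Real.sin_neg]
    push_cast
    field_simp
    have hcanc : ∀ w : ℂ, w * (n:ℂ) / -(n:ℂ) = -w := fun w => by
      rw [div_neg, mul_div_assoc, div_self hn0, mul_one]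
    ring
  rw [key, Complex.norm_add_mul_I]
  have hg0 : 0 ≤ gfun z := gfun_nonneg z
  have h1 : (Real.cos z - 1)^2 ≤ (gfun z)^2 := by
    calc (Real.cos z - 1)^2 = |Real.cos z - 1|^2 := (sq_abs _).symm
      _ ≤ (gfun z)^2 := pow_le_pow_left₀ (abs_nonneg _) (abs_cos_sub_one_le_gfun z) 2
  have h2 : (Real.sin z)^2 ≤ (gfun z)^2 := by
    calc (Real.sin z)^2 = |Real.sin z|^2 := (sq_abs _).symm
      _ ≤ (gfun z)^2 := pow_le_pow_left₀ (abs_nonneg _) (abs_sin_le_gfun z) 2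
  have key2 : a^2 + b^2 ≤ (4 * gfun z / n)^2 := by
    have e3 : a^2 + b^2 = (((Real.cos z - 1) * (y - y'))^2 + (Real.sin z * (y + y'))^2) / (n:ℝ)^2 := by
      rw [ha, hb]; field_simp
    have e4 : (4 * gfun z / n)^2 = (4 * gfun z)^2 / (n:ℝ)^2 := div_pow _ _ _
    rw [e3, e4]
    gcongr ?_ / _
    have h16 : 0 ≤ 16 - (y - y')^2 - (y + y')^2 := by nlinarith
    nlinarith [mul_nonneg (sub_nonneg.2 h1) (sq_nonneg (y - y')),
      mul_nonneg (sub_nonneg.2 h2) (sq_nonneg (y + y')),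
      mul_nonneg (sq_nonneg (gfun z)) h16]
  have h4 : 0 ≤ 4 * gfun z / n := by positivity
  calc Real.sqrt (a^2 + b^2) ≤ Real.sqrt ((4 * gfun z / n)^2) := Real.sqrt_le_sqrt key2
    _ = 4 * gfun z / n := Real.sqrt_sq h4

theorem GH_le_g_sum (H : ℕ) (hH : 0 < H) :
    GH H ≤ 4 * sSup {r : ℝ | ∃ α ∈ Set.Ico (0:ℝ) 1,
      r = ∑ h ∈ Finset.Icc 1 H, gfun (2 * Real.pi * α * h) / h} := by
  have hbdd : BddAbove {r : ℝ | ∃ α ∈ Set.Ico (0:ℝ) 1,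
      r = ∑ h ∈ Finset.Icc 1 H, gfun (2 * Real.pi * α * h) / h} := by
    refine ⟨∑ h ∈ Finset.Icc 1 H, 2 / (h:ℝ), ?_⟩
    rintro r ⟨α, hα, rfl⟩
    apply Finset.sum_le_sum
    intro i hi
    have hi1 : 1 ≤ i := (Finset.mem_Icc.1 hi).1
    have hi0 : (0:ℝ) < i := by exact_mod_cast hi1
    gcongr
    exact gfun_le_two _
  unfold GH
  apply csSup_le
  · refine ⟨0, 0, ⟨le_rfl, zero_lt_one⟩, fun _ => 0, fun h => ⟨by norm_num, by norm_num⟩, by simp⟩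
  · rintro r ⟨α, hα, y, hy, rfl⟩
    have hsplit : (Finset.Icc (-(H:ℤ)) (H:ℤ)).filter (fun h => h ≠ 0)
        = Finset.Icc 1 (H:ℤ) ∪ (Finset.Icc (1:ℤ) (H:ℤ)).image Neg.neg := by
      ext x
      simp only [Finset.mem_filter, Finset.mem_Icc, Finset.mem_union, Finset.mem_image]
      constructor
      · rintro ⟨⟨h1, h2⟩, h3⟩
        rcases lt_or_gt_of_ne h3 with h | h
        · exact Or.inr ⟨-x, ⟨by omega, by omega⟩, by omega⟩
        · exact Or.inl ⟨by omega, h2⟩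
      · rintro (⟨h1, h2⟩ | ⟨a, ⟨h1, h2⟩, rfl⟩) <;> omega
    have hdisj : Disjoint (Finset.Icc (1:ℤ) (H:ℤ)) ((Finset.Icc (1:ℤ) (H:ℤ)).image Neg.neg) := by
      rw [Finset.disjoint_left]
      intro x hx hx'
      simp only [Finset.mem_Icc] at hx
      simp only [Finset.mem_image, Finset.mem_Icc] at hx'
      obtain ⟨a, ha, rfl⟩ := hx'
      omega
    have hinj : ∀ x ∈ Finset.Icc (1:ℤ) (H:ℤ), ∀ z ∈ Finset.Icc (1:ℤ) (H:ℤ),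
        Neg.neg x = Neg.neg z → x = z := by intro x _ z _ h; omega
    rw [hsplit, Finset.sum_union hdisj, Finset.sum_image hinj, ← Finset.sum_add_distrib]
    calc ‖∑ h ∈ Finset.Icc (1:ℤ) (H:ℤ),
          ((Complex.exp (2 * Real.pi * Complex.I * α * h) - 1) / h * (y h : ℂ)
            + (Complex.exp (2 * Real.pi * Complex.I * α * (-h : ℤ)) - 1) / ((-h : ℤ) : ℂ) * (y (-h) : ℂ))‖
        ≤ ∑ h ∈ Finset.Icc (1:ℤ) (H:ℤ),
            ‖(Complex.exp (2 * Real.pi * Complex.I * α * h) - 1) / h * (y h : ℂ)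
            + (Complex.exp (2 * Real.pi * Complex.I * α * (-h : ℤ)) - 1) / ((-h : ℤ) : ℂ) * (y (-h) : ℂ)‖ :=
          norm_sum_le _ _
      _ ≤ ∑ h ∈ Finset.Icc (1:ℤ) (H:ℤ), 4 * gfun (2 * Real.pi * α * h) / h := by
          apply Finset.sum_le_sum
          intro i hi
          have hi1 : (1:ℤ) ≤ i := (Finset.mem_Icc.1 hi).1
          exact pair_bound α i hi1 (y i) (y (-i)) (Set.mem_Icc.1 (hy i)).1 (Set.mem_Icc.1 (hy i)).2
            (Set.mem_Icc.1 (hy (-i))).1 (Set.mem_Icc.1 (hy (-i))).2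
      _ = 4 * ∑ h ∈ Finset.Icc 1 H, gfun (2 * Real.pi * α * h) / h := by
          have himg : Finset.Icc (1:ℤ) (H:ℤ) = (Finset.Icc 1 H).image (Nat.cast : ℕ → ℤ) := by
            ext x
            simp only [Finset.mem_Icc, Finset.mem_image]
            constructor
            · rintro ⟨h1, h2⟩
              exact ⟨x.toNat, ⟨by omega, by omega⟩, by omega⟩
            · rintro ⟨a, ⟨h1, h2⟩, rfl⟩
              omega
          rw [himg, Finset.sum_image (by intro a _ b _ h; exact_mod_cast h), Finset.mul_sum]
          apply Finset.sum_congr rfl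
          intro i _
          push_cast
          ring
      _ ≤ 4 * sSup {r : ℝ | ∃ α ∈ Set.Ico (0:ℝ) 1,
            r = ∑ h ∈ Finset.Icc 1 H, gfun (2 * Real.pi * α * h) / h} := by
          gcongr
          · exact le_csSup hbdd ⟨α, hα, rfl⟩
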